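/- arXiv:math/0209406 — 3 statements merged into one kernel-verified Lean document; each statement's English description precedes it below -/
import Mathlib

section
/- Let K be an algebraically closed field, and let X, X' be integral varieties over K whose only invertible regular functions are constants. If X' × (K^*)^{r'} is isomorphic to X × (K^*)^r as varieties, then r = r'. -/
/-!
The invariant is the group of units modulo the constants. Over a domain `A`, every unit of the
Laurent polynomial ring `A[ℤ^r]` is a monomial `c • X^g` with `c ∈ Aˣ`: since `ℤ^r` has unique
sums, a product of two polynomials that are not both monomials has at least two monomials
with nonzero coefficient, so it cannot be `1`. Hence the exponent `g` is a homomorphism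
`A[ℤ^r]ˣ → ℤ^r`, surjective with kernel `Aˣ`, and `Aˣ = K^*` gives `A[ℤ^r]ˣ / K^* ≃ ℤ^r`.
A `K`-algebra isomorphism fixes `K^*`, so `ℤ^{r'} ≃ ℤ^r` as groups, and `r = r'` by comparing
ranks.
-/

open Finset

section ConstUnits

variable (K : Type*) {B C : Type*} [CommSemiring K]

variable (B) in
def constUnits [Semiring B] [Algebra K B] : Subgroup Bˣ :=
  (Units.map (algebraMap K B : K →* B)).range

theorem AlgEquiv.map_constUnits [Semiring B] [Algebra K B] [Semiring C] [Algebra K C]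
    (e : B ≃ₐ[K] C) : (constUnits K B).map (Units.map (e : B →* C)) = constUnits K C := by
  rw [constUnits, constUnits, MonoidHom.map_range]
  congr 1
  ext k
  exact e.commutes k

noncomputable def AlgEquiv.unitsModConstCongr [CommSemiring B] [Algebra K B] [CommSemiring C]
    [Algebra K C] (e : B ≃ₐ[K] C) : Bˣ ⧸ constUnits K B ≃* Cˣ ⧸ constUnits K C :=
  QuotientGroup.congr _ _ (Units.mapEquiv (e : B ≃* C)) (e.map_constUnits K)

end ConstUnits

namespace AddMonoidAlgebra

variable {R G : Type*} [Semiring R]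

section SingleUnits

variable (R G) [AddGroup G]

noncomputable def singleUnitsHom : Rˣ × Multiplicative G →* (R[G])ˣ :=
  (Units.map singleHom).comp <| MulEquiv.prodUnits.symm.toMonoidHom.comp <|
    (MonoidHom.id _).prodMap toUnits.toMonoidHom

@[simp] theorem coe_singleUnitsHom (x : Rˣ × Multiplicative G) :
    (singleUnitsHom R G x : R[G]) = single x.2.toAdd (x.1 : R) := rfl

theorem singleUnitsHom_injective [Nontrivial R] : Function.Injective (singleUnitsHom R G) := by
  refine (injective_iff_map_eq_one _).2 fun x hx ↦ ?_
  have h := congrArg Units.val hx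
  rw [coe_singleUnitsHom, Units.val_one, one_def, single_inj] at h
  obtain ⟨hg, hc⟩ := h.resolve_right fun h ↦ one_ne_zero h.2
  exact Prod.ext (Units.ext hc) hg

end SingleUnits

theorem mul_eq_one_of_single_mul_single_eq_one [Nontrivial R] [AddMonoid G] {a b : G} {c d : R}
    (h : single a c * single b d = (1 : R[G])) : c * d = 1 := by
  rw [single_mul_single, one_def, single_inj] at h
  exact (h.resolve_right fun h ↦ one_ne_zero h.2).2

variable [NoZeroDivisors R]

theorem card_support_mul_card_support_le_one [AddMonoid G] [TwoUniqueSums G] {f g : R[G]}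
    (h : f * g = 1) : #f.coeff.support * #g.coeff.support ≤ 1 := by
  by_contra! hlt
  obtain ⟨p, hp, q, hq, hne, hpu, hqu⟩ := TwoUniqueSums.uniqueAdd_of_one_lt_card hlt
  have hzero : ∀ {x : G × G}, x ∈ f.coeff.support ×ˢ g.coeff.support →
      UniqueAdd f.coeff.support g.coeff.support x.1 x.2 → x.1 + x.2 = 0 := by
    intro x hx hu
    rw [mem_product, Finsupp.mem_support_iff, Finsupp.mem_support_iff] at hx
    have hx0 : (f * g).coeff (x.1 + x.2) ≠ 0 := by
      rw [coeff_mul_add_of_uniqueAdd hu]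
      exact mul_ne_zero hx.1 hx.2
    by_contra hne0
    rw [h, one_def, coeff_single, Finsupp.single_eq_of_ne hne0] at hx0
    exact hx0 rfl
  rw [mem_product] at hq
  refine hne (Prod.ext_iff.2 (hpu hq.1 hq.2 ?_)).symm
  rw [hzero hp hpu, hzero (mem_product.2 hq) hqu]

variable [Nontrivial R]

theorem exists_eq_single_of_mul_eq_one [AddMonoid G] [TwoUniqueSums G] {f g : R[G]}
    (h : f * g = 1) : ∃ a c, f = single a c := by
  have hg : 0 < #g.coeff.support := by
    rw [card_pos, Finsupp.support_nonempty_iff, Ne, coeff_eq_zero]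
    rintro rfl
    exact one_ne_zero (h.symm.trans (mul_zero f))
  obtain ⟨a, c, hf⟩ := Finsupp.card_support_le_one'.1
    (le_of_mul_le_of_one_le_left (card_support_mul_card_support_le_one h) hg)
  exact ⟨a, c, coeff_injective hf⟩

theorem exists_eq_single_of_isUnit [AddMonoid G] [TwoUniqueSums G] {f : R[G]} (hf : IsUnit f) :
    ∃ (a : G) (c : Rˣ), f = single a (c : R) := by
  obtain ⟨u, rfl⟩ := hf
  obtain ⟨a, c, hu⟩ := exists_eq_single_of_mul_eq_one u.mul_inv
  obtain ⟨b, d, hv⟩ := exists_eq_single_of_mul_eq_one u.inv_mul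
  refine ⟨a, ⟨c, d, ?_, ?_⟩, hu⟩
  · exact mul_eq_one_of_single_mul_single_eq_one (hu ▸ hv ▸ u.mul_inv)
  · exact mul_eq_one_of_single_mul_single_eq_one (hu ▸ hv ▸ u.inv_mul)

section UnitsDegree

variable (R G) [AddGroup G] [TwoUniqueSums G]

theorem singleUnitsHom_surjective : Function.Surjective (singleUnitsHom R G) := fun u ↦ by
  obtain ⟨a, c, hu⟩ := exists_eq_single_of_isUnit u.isUnit
  exact ⟨(c, .ofAdd a), Units.ext hu.symm⟩

noncomputable def unitsEquivProd : Rˣ × Multiplicative G ≃* (R[G])ˣ :=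
  .ofBijective _ ⟨singleUnitsHom_injective R G, singleUnitsHom_surjective R G⟩

noncomputable def unitsDegree : (R[G])ˣ →* Multiplicative G :=
  (MonoidHom.snd _ _).comp (unitsEquivProd R G).symm.toMonoidHom

theorem unitsDegree_singleUnitsHom (x : Rˣ × Multiplicative G) :
    unitsDegree R G (singleUnitsHom R G x) = x.2 := by
  change ((unitsEquivProd R G).symm (unitsEquivProd R G x)).2 = x.2
  rw [MulEquiv.symm_apply_apply]

theorem unitsDegree_surjective : Function.Surjective (unitsDegree R G) :=
  fun g ↦ ⟨singleUnitsHom R G (1, g), unitsDegree_singleUnitsHom R G _⟩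

theorem mem_ker_unitsDegree {u : (R[G])ˣ} :
    u ∈ (unitsDegree R G).ker ↔ ∃ c : Rˣ, (u : R[G]) = single 0 (c : R) := by
  obtain ⟨⟨c, g⟩, rfl⟩ := singleUnitsHom_surjective R G u
  rw [MonoidHom.mem_ker, unitsDegree_singleUnitsHom, coe_singleUnitsHom]
  constructor
  · rintro rfl
    exact ⟨c, rfl⟩
  · rintro ⟨d, h⟩
    exact toAdd_eq_zero.1 ((single_inj.1 h).resolve_right fun h ↦ c.ne_zero h.1).1

theorem ker_unitsDegree {K : Type*} [CommSemiring K] [Algebra K R]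
    (hunits : ∀ u : Rˣ, ∃ c : Kˣ, (u : R) = algebraMap K R c) :
    (unitsDegree R G).ker = constUnits K R[G] := by
  ext u
  rw [mem_ker_unitsDegree, constUnits, MonoidHom.mem_range]
  constructor
  · rintro ⟨c, hu⟩
    obtain ⟨k, hk⟩ := hunits c
    exact ⟨k, Units.ext (by rw [hu, hk]; rfl)⟩
  · rintro ⟨k, rfl⟩
    exact ⟨Units.map (algebraMap K R : K →* R) k, rfl⟩

end UnitsDegree

noncomputable def unitsModConstEquiv (K G : Type*) {A : Type*} [CommSemiring K] [CommSemiring A]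
    [NoZeroDivisors A] [Nontrivial A] [Algebra K A] [AddCommGroup G] [TwoUniqueSums G]
    (hunits : ∀ u : Aˣ, ∃ c : Kˣ, (u : A) = algebraMap K A c) :
    (A[G])ˣ ⧸ constUnits K A[G] ≃* Multiplicative G :=
  (QuotientGroup.quotientMulEquivOfEq (ker_unitsDegree A G hunits).symm).trans
    (QuotientGroup.quotientKerEquivOfSurjective _ (unitsDegree_surjective A G))

end AddMonoidAlgebra

theorem torus_factor_cancellation_rank_general (K : Type*) [Field K]
    (A A' : Type*) [CommRing A] [IsDomain A] [Algebra K A]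
    [CommRing A'] [IsDomain A'] [Algebra K A']
    (hunits : ∀ u : Aˣ, ∃ c : Kˣ, (u : A) = algebraMap K A (c : K))
    (hunits' : ∀ u : A'ˣ, ∃ c : Kˣ, (u : A') = algebraMap K A' (c : K))
    (r r' : ℕ)
    (h : Nonempty
      (AddMonoidAlgebra A' (Fin r' → ℤ) ≃ₐ[K] AddMonoidAlgebra A (Fin r → ℤ))) :
    r = r' := by
  obtain ⟨e⟩ := h
  let φ : Multiplicative (Fin r' → ℤ) ≃* Multiplicative (Fin r → ℤ) :=
    ((AddMonoidAlgebra.unitsModConstEquiv K (Fin r' → ℤ) hunits').symm.trans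
      (e.unitsModConstCongr K)).trans (AddMonoidAlgebra.unitsModConstEquiv K (Fin r → ℤ) hunits)
  simpa using (AddEquiv.toMultiplicative.symm φ).toIntLinearEquiv.finrank_eq.symm

/-- Cancellation of torus factors (first assertion of Lemma 4.3): if `X`, `X'` are
integral (affine) varieties over an algebraically closed field `K` whose only invertible
regular functions are constants, and `X' × (K*)^{r'} ≅ X × (K*)^r` as varieties, then
`r = r'`.

We encode a variety by its coordinate ring: a finitely generated integral `K`-algebra
whose units all come from `K*`.  The coordinate ring of `X × (K*)^r` is the Laurent
polynomial ring `A[ℤ^r] = AddMonoidAlgebra A (Fin r → ℤ)`, and an isomorphism of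
varieties corresponds to an isomorphism of `K`-algebras. -/
theorem torus_factor_cancellation_rank (K : Type*) [Field K] [IsAlgClosed K]
    (A A' : Type*) [CommRing A] [IsDomain A] [Algebra K A]
    [CommRing A'] [IsDomain A'] [Algebra K A']
    (hfg : Algebra.FiniteType K A) (hfg' : Algebra.FiniteType K A')
    (hunits : ∀ u : Aˣ, ∃ c : Kˣ, (u : A) = algebraMap K A (c : K))
    (hunits' : ∀ u : A'ˣ, ∃ c : Kˣ, (u : A') = algebraMap K A' (c : K))
    (r r' : ℕ)
    (h : Nonempty
      (AddMonoidAlgebra A' (Fin r' → ℤ) ≃ₐ[K] AddMonoidAlgebra A (Fin r → ℤ))) :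
    r = r' :=
  torus_factor_cancellation_rank_general K A A' hunits hunits' r r' h
end

section
/- Let K be an algebraically closed field, and let X, X' be irreducible varieties over K whose only invertible regular functions are constants. If f: X' × (K^*)^{r'} → X × (K^*)^r is an isomorphism of varieties, then X is isomorphic to X' as a variety. -/
/-!
Over a domain `A` and a group `G` with `TwoUniqueSums` (e.g. `ℤʳ`), the units of `A[G]` are the
monomials `a • xᵍ` with `a ∈ Aˣ`. If moreover `Aˣ = Kˣ`, the isomorphism `f` maps every monomial
to a constant multiple of a monomial.

Geometrically `f` is an isomorphism `X × T ≅ X' × T'`. Since `A'ˣ = Kˣ`, the torus coordinate of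
`X' × {1} → X' × T' ≅ X × T` is a constant point `t`. Restricting `f` to `X' × {1}` and to
`X × {t}` (`evalAt 1` and `evalAt t`) gives maps `A ⇄ A'`. They are mutually inverse by the identity
`φ (single 0 (evalAt t x)) = φ x`, valid for every `φ` sending each monomial `xᵍ` to the constant
`t(g)`: it applies to `evalAt 1 ∘ f⁻¹` by the choice of `t`, and to `evalAt t ∘ f` (with the
trivial point) because `f` maps monomials to constant multiples of monomials.
-/

open Finset

namespace AddMonoidAlgebra

section Units

variable {R G : Type*}

theorem isUnit_single_one [Semiring R] [AddGroup G] (g : G) : IsUnit (single g (1 : R)) :=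
  (Group.isUnit (Multiplicative.ofAdd g)).map (of R G)

theorem add_eq_zero_and_mul_eq_one_of_uniqueAdd [Semiring R] [NoZeroDivisors R] [AddMonoid G]
    {u v : R[G]} (huv : u * v = 1) {a b : G} (ha : a ∈ u.coeff.support)
    (hb : b ∈ v.coeff.support) (hab : UniqueAdd u.coeff.support v.coeff.support a b) :
    a + b = 0 ∧ u.coeff a * v.coeff b = 1 := by
  have hcoeff := coeff_mul_add_of_uniqueAdd hab
  rw [huv, one_def, coeff_single] at hcoeff
  have hne : u.coeff a * v.coeff b ≠ 0 :=
    mul_ne_zero (Finsupp.mem_support_iff.mp ha) (Finsupp.mem_support_iff.mp hb)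
  have hsum : a + b = 0 := by
    by_contra h
    rw [Finsupp.single_eq_of_ne h] at hcoeff
    exact hne hcoeff.symm
  rw [hsum, Finsupp.single_eq_same] at hcoeff
  exact ⟨hsum, hcoeff.symm⟩

variable [CommSemiring R] [NoZeroDivisors R] [Nontrivial R] [AddMonoid G] [TwoUniqueSums G]

theorem exists_eq_single_of_isUnit_s8 {u : R[G]} (hu : IsUnit u) :
    ∃ g a, IsUnit a ∧ u = single g a := by
  obtain ⟨v, huv⟩ := hu.exists_right_inv
  set A := u.coeff.support
  set B := v.coeff.support
  have hA : A.Nonempty := by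
    rw [Finsupp.support_nonempty_iff, Ne, coeff_eq_zero]; rintro rfl; simp at huv
  have hB : B.Nonempty := by
    rw [Finsupp.support_nonempty_iff, Ne, coeff_eq_zero]; rintro rfl; simp at huv
  -- Two distinct uniquely attained sums would both have to be `0`.
  have hcard : ¬ 1 < #A * #B := by
    intro h
    obtain ⟨p, hp, q, hq, hpq, hpU, hqU⟩ := TwoUniqueSums.uniqueAdd_of_one_lt_card h
    rw [mem_product] at hp hq
    have hsum : q.1 + q.2 = p.1 + p.2 := by
      rw [(add_eq_zero_and_mul_eq_one_of_uniqueAdd huv hp.1 hp.2 hpU).1,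
        (add_eq_zero_and_mul_eq_one_of_uniqueAdd huv hq.1 hq.2 hqU).1]
    exact hpq (Prod.ext (hpU hq.1 hq.2 hsum).1 (hpU hq.1 hq.2 hsum).2).symm
  obtain ⟨g, hg⟩ : ∃ g, A = {g} := by
    rw [← card_eq_one]
    have := hA.card_pos
    have := hB.card_pos
    nlinarith
  obtain ⟨a, ha, b, hb, habU⟩ := UniqueSums.uniqueAdd_of_nonempty hA hB
  refine ⟨g, u.coeff g, ?_, ext (Finsupp.support_eq_singleton.mp hg).2⟩
  obtain rfl : a = g := by simpa [hg] using ha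
  exact IsUnit.of_mul_eq_one _ (add_eq_zero_and_mul_eq_one_of_uniqueAdd huv ha hb habU).2

theorem exists_eq_smul_single_of_isUnit {K : Type*} [Field K] [Algebra K R]
    (hR : ∀ a : Rˣ, ∃ c : Kˣ, (a : R) = algebraMap K R c) {u : R[G]} (hu : IsUnit u) :
    ∃ g, ∃ c : Kˣ, u = (c : K) • single g 1 := by
  obtain ⟨g, a, ha, rfl⟩ := exists_eq_single_of_isUnit_s8 hu
  obtain ⟨c, hc⟩ := hR ha.unit
  refine ⟨g, c, ?_⟩
  rw [smul_single, Algebra.smul_def, mul_one, ← hc, IsUnit.unit_spec]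

end Units

section Evaluation

variable {K A G : Type*} [CommSemiring K] [CommSemiring A] [Algebra K A] [AddMonoid G]

noncomputable def evalAt (t : Multiplicative G →* Kˣ) : A[G] →ₐ[K] A :=
  (lift A A G ((algebraMap K A : K →* A).comp ((Units.coeHom K).comp t))).restrictScalars K

theorem evalAt_single (t : Multiplicative G →* Kˣ) (m : G) (a : A) :
    evalAt t (single m a) = a * algebraMap K A (t (.ofAdd m)) := by
  simp [evalAt]

theorem evalAt_single_zero (t : Multiplicative G →* Kˣ) (a : A) : evalAt t (single 0 a) = a := by
  simp [evalAt_single]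

theorem apply_single_zero_evalAt {B : Type*} [Semiring B] [Algebra K B] (φ : A[G] →ₐ[K] B)
    (t : Multiplicative G →* Kˣ) (ht : ∀ m, φ (single m 1) = algebraMap K B (t (.ofAdd m)))
    (x : A[G]) : φ (single 0 (evalAt t x)) = φ x := by
  suffices (φ.comp singleZeroAlgHom).comp (evalAt t) = φ from congr($this x)
  ext m
  · simp only [AlgHom.comp_apply, evalAt_single, one_mul, ht]
    exact φ.commutes _
  · simp [evalAt_single_zero]

end Evaluation

end AddMonoidAlgebra

open AddMonoidAlgebra

namespace TorusCancellation

variable {K A A' G G' : Type*} [Field K] [CommRing A] [Algebra K A] [CommRing A'] [Algebra K A']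
  [Nontrivial A'] [AddCommGroup G] [AddCommGroup G']

noncomputable def unitsMulEquivOfUnitsConst (h : ∀ u : A'ˣ, ∃ c : Kˣ, (u : A') = algebraMap K A' c) :
    Kˣ ≃* A'ˣ :=
  MulEquiv.ofBijective (Units.map (algebraMap K A' : K →* A'))
    ⟨Units.map_injective (algebraMap K A').injective,
      fun u => (h u).imp fun _ hc => Units.ext hc.symm⟩

variable (h : ∀ u : A'ˣ, ∃ c : Kˣ, (u : A') = algebraMap K A' c) (f : A'[G'] ≃ₐ[K] A[G])

noncomputable def basePoint : Multiplicative G →* Kˣ :=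
  (unitsMulEquivOfUnitsConst h).symm.toMonoidHom.comp
    ((Units.map (((evalAt 1 : A'[G'] →ₐ[K] A') : A'[G'] →* A').comp (f.symm : A[G] →* A'[G']))).comp
      (MonoidHom.toHomUnits (of A G)))

theorem algebraMap_basePoint (m : G) :
    algebraMap K A' (basePoint h f (.ofAdd m)) =
      (evalAt 1 : A'[G'] →ₐ[K] A') (f.symm (single m 1)) :=
  congrArg Units.val ((unitsMulEquivOfUnitsConst h).apply_symm_apply _)

variable {f}

theorem evalAt_basePoint_apply_single
    (hf : ∀ g', ∃ g, ∃ c : Kˣ, f (single g' 1) = (c : K) • single g 1) (g' : G') :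
    evalAt (basePoint h f) (f (single g' 1)) = 1 := by
  obtain ⟨g, c, hc⟩ := hf g'
  have hpoint : basePoint h f (.ofAdd g) = c⁻¹ := by
    have hsingle : single g (1 : A) = (c : K)⁻¹ • f (single g' 1) := by
      rw [hc, smul_smul, inv_mul_cancel₀ c.ne_zero, one_smul]
    refine Units.ext ((algebraMap K A').injective ?_)
    rw [algebraMap_basePoint, hsingle, map_smul, AlgEquiv.symm_apply_apply, map_smul,
      evalAt_single, one_mul, MonoidHom.one_apply, Units.val_one, map_one, Algebra.smul_def,
      mul_one, Units.val_inv_eq_inv_val]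
  rw [hc, map_smul, evalAt_single, hpoint, one_mul, Algebra.smul_def, ← map_mul,
    Units.val_inv_eq_inv_val, mul_inv_cancel₀ c.ne_zero, map_one]

noncomputable def baseAlgEquiv (hf : ∀ g', ∃ g, ∃ c : Kˣ, f (single g' 1) = (c : K) • single g 1) :
    A ≃ₐ[K] A' :=
  AlgEquiv.ofAlgHom ((evalAt 1).comp (f.symm.toAlgHom.comp singleZeroAlgHom))
    ((evalAt (basePoint h f)).comp (f.toAlgHom.comp singleZeroAlgHom))
    (by
      ext a'
      have := apply_single_zero_evalAt ((evalAt 1).comp f.symm.toAlgHom) (basePoint h f)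
        (fun m => (algebraMap_basePoint h f m).symm) (f (single 0 a'))
      simpa [evalAt_single_zero] using this)
    (by
      ext a
      have := apply_single_zero_evalAt ((evalAt (basePoint h f)).comp f.toAlgHom) 1
        (fun g' => by simp [evalAt_basePoint_apply_single h hf]) (f.symm (single 0 a))
      simpa [evalAt_single_zero] using this)

end TorusCancellation

theorem torus_factor_cancellation_base_general (K : Type*) [Field K]
    (A A' : Type*) [CommRing A] [IsDomain A] [Algebra K A]
    [CommRing A'] [IsDomain A'] [Algebra K A']
    (hunits : ∀ u : Aˣ, ∃ c : Kˣ, (u : A) = algebraMap K A (c : K))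
    (hunits' : ∀ u : A'ˣ, ∃ c : Kˣ, (u : A') = algebraMap K A' (c : K))
    (r r' : ℕ)
    (f : AddMonoidAlgebra A' (Fin r' → ℤ) ≃ₐ[K] AddMonoidAlgebra A (Fin r → ℤ)) :
    Nonempty (A ≃ₐ[K] A') :=
  ⟨TorusCancellation.baseAlgEquiv hunits' fun g' =>
    exists_eq_smul_single_of_isUnit hunits ((isUnit_single_one g').map f)⟩

/-- Cancellation of torus factors (second assertion of Lemma 4.3): if `X`, `X'` are
irreducible (affine) varieties over an algebraically closed field `K` whose only
invertible regular functions are constants, and `f : X' × (K*)^{r'} → X × (K*)^r` is an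
isomorphism of varieties, then `X ≅ X'` as varieties.

We encode a variety by its coordinate ring: a finitely generated integral `K`-algebra
whose units all come from `K*`.  The coordinate ring of `X × (K*)^r` is the Laurent
polynomial ring `A[ℤ^r] = AddMonoidAlgebra A (Fin r → ℤ)`, and an isomorphism of
varieties corresponds to an isomorphism of `K`-algebras. -/
theorem torus_factor_cancellation_base (K : Type*) [Field K] [IsAlgClosed K]
    (A A' : Type*) [CommRing A] [IsDomain A] [Algebra K A]
    [CommRing A'] [IsDomain A'] [Algebra K A']
    (hfg : Algebra.FiniteType K A) (hfg' : Algebra.FiniteType K A')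
    (hunits : ∀ u : Aˣ, ∃ c : Kˣ, (u : A) = algebraMap K A (c : K))
    (hunits' : ∀ u : A'ˣ, ∃ c : Kˣ, (u : A') = algebraMap K A' (c : K))
    (r r' : ℕ)
    (f : AddMonoidAlgebra A' (Fin r' → ℤ) ≃ₐ[K] AddMonoidAlgebra A (Fin r → ℤ)) :
    Nonempty (A ≃ₐ[K] A') :=
  torus_factor_cancellation_base_general K A A' hunits hunits' r r' f
end

section
/- Let K be a field and R = K[x,y,z]/(z^2 − xy). The localization of R at the prime ideal P = (y, z) is a discrete valuation ring, and the element y has valuation 2 while z has valuation 1 in this DVR. -/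
open MvPolynomial
set_option synthInstance.maxHeartbeats 1000000

/-!
Write `x, y, z` for the variables `X 0, X 1, X 2`. As a polynomial in `z` over `K[x, y]`,
`z² - xy` is Eisenstein at the prime `x`, so `R` is a domain; `P` is prime as the image of the
prime ideal `(y, z)` of `K[x, y, z]`, which contains `z² - xy`. Since `x ∉ P` becomes a unit in
`R_P`, the relation `z² = xy` makes `y` an associate of `z²`, so the maximal ideal `(y, z)` of
the Noetherian local domain `R_P` is generated by `z ≠ 0`. Hence `R_P` is a DVR with uniformizer
`z`, and `y ~ z²` has valuation `2`.
-/

open Polynomial in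
theorem Polynomial.irreducible_X_pow_sub_C_of_prime_dvd {A : Type*} [CommRing A] [IsDomain A]
    {p c : A} (hp : Prime p) (hpc : p ∣ c) (hpc2 : ¬p ^ 2 ∣ c) {n : ℕ} (hn : n ≠ 0) :
    Irreducible (X ^ n - C c : A[X]) := by
  have hmonic : (X ^ n - C c : A[X]).Monic := monic_X_pow_sub_C c hn
  have hdeg : (X ^ n - C c : A[X]).natDegree = n := natDegree_X_pow_sub_C
  have hP : (Ideal.span {p}).IsPrime := (Ideal.span_singleton_prime hp.ne_zero).2 hp
  refine IsEisensteinAt.irreducible (𝓟 := Ideal.span {p}) ?_ hP hmonic.isPrimitive (by omega)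
  refine hmonic.isEisensteinAt_of_mem_of_notMem hP.ne_top (fun {k} hk => ?_) ?_
  · rw [hdeg] at hk
    rcases eq_or_ne k 0 with rfl | hk0
    · simpa [coeff_X_pow, hn.symm, Ideal.mem_span_singleton] using hpc
    · simp [coeff_X_pow, coeff_C, hk0, hk.ne]
  · simpa [coeff_X_pow, hn.symm, Ideal.span_singleton_pow, Ideal.mem_span_singleton] using hpc2

theorem MvPolynomial.isPrime_span_X_image {σ R : Type*} [CommRing R] [IsDomain R] (s : Set σ) :
    (Ideal.span (X '' s : Set (MvPolynomial σ R))).IsPrime := by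
  classical
  let ψ : MvPolynomial σ R →ₐ[R] MvPolynomial σ R := aeval fun i => if i ∈ s then 0 else X i
  have hsub : ∀ p, p - ψ p ∈ Ideal.span (X '' s : Set (MvPolynomial σ R)) := by
    intro p
    induction p using MvPolynomial.induction_on with
    | C a => simp [ψ]
    | add p q hp hq => simpa [add_sub_add_comm] using Ideal.add_mem _ hp hq
    | mul_X p i hp =>
      by_cases hi : i ∈ s
      · simpa [ψ, hi] using Ideal.mul_mem_left _ p (Ideal.subset_span (Set.mem_image_of_mem X hi))
      · simpa [ψ, hi, ← sub_mul] using Ideal.mul_mem_right (X i) _ hp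
  have hker : Ideal.span (X '' s : Set (MvPolynomial σ R)) = RingHom.ker ψ := by
    refine le_antisymm ?_ fun p hp => by simpa [RingHom.mem_ker.mp hp] using hsub p
    rw [Ideal.span_le]
    rintro _ ⟨i, hi, rfl⟩
    simp [ψ, hi]
  rw [hker]
  exact RingHom.ker_isPrime _

namespace IsLocalRing

variable {A : Type*} [CommRing A] [IsDomain A] [IsLocalRing A] {ϖ : A}

theorem isDiscreteValuationRing_of_maximalIdeal_eq_span [IsNoetherianRing A] (hϖ : ϖ ≠ 0)
    (hm : maximalIdeal A = Ideal.span {ϖ}) : IsDiscreteValuationRing A := by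
  have hnf : ¬IsField A := by
    rw [isField_iff_maximalIdeal_eq, hm, Ideal.span_singleton_eq_bot]
    exact hϖ
  have hprin : (maximalIdeal A).IsPrincipal := ⟨⟨ϖ, hm⟩⟩
  exact ((IsDiscreteValuationRing.TFAE A hnf).out 0 4).mpr hprin

theorem mem_maximalIdeal_pow_iff_of_associated (hϖ : ϖ ≠ 0)
    (hm : maximalIdeal A = Ideal.span {ϖ}) {a : A} {n : ℕ} (ha : Associated a (ϖ ^ n)) (k : ℕ) :
    a ∈ maximalIdeal A ^ k ↔ k ≤ n := by
  have hϖu : ϖ ∈ maximalIdeal A := hm ▸ Ideal.mem_span_singleton_self ϖ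
  rw [hm, Ideal.span_singleton_pow, Ideal.mem_span_singleton, ha.dvd_iff_dvd_right,
    pow_dvd_pow_iff hϖ hϖu]

end IsLocalRing

noncomputable section

namespace QuadricCone

variable (K : Type*) [Field K]

abbrev equation : MvPolynomial (Fin 3) K := X 2 ^ 2 - X 0 * X 1

abbrev CoordRing := MvPolynomial (Fin 3) K ⧸ Ideal.span {equation K}

abbrev axisIdeal : Ideal (CoordRing K) :=
  Ideal.span {Ideal.Quotient.mk _ (X 1), Ideal.Quotient.mk _ (X 2)}

theorem prime_equation : Prime (equation K) := by
  -- `finSuccEquivLast` sends `z = X 2` to `none`, so `e` views `z` as the variable over `K[x, y]`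
  let e := (renameEquiv K finSuccEquivLast).trans (optionEquivLeft K (Fin 2))
  have he : ∀ i : Fin 2, e (X (Fin.castSucc i)) = Polynomial.C (X i) := fun i => by
    simp [e, finSuccEquivLast_castSucc, optionEquivLeft_X_some]
  have he2 : e (X (Fin.last 2)) = Polynomial.X := by
    rw [AlgEquiv.trans_apply, renameEquiv_apply, rename_X, finSuccEquivLast_last,
      optionEquivLeft_X_none]
  have heq : e (equation K) = Polynomial.X ^ 2 - Polynomial.C (X 0 * X 1) := by
    simp only [equation, map_sub, map_pow, map_mul]
    rw [show (2 : Fin 3) = Fin.last 2 from rfl, he2, show (0 : Fin 3) = Fin.castSucc 0 from rfl,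
      show (1 : Fin 3) = Fin.castSucc 1 from rfl, he, he]
  rw [← MulEquiv.prime_iff e.toMulEquiv]
  change Prime (e (equation K))
  rw [heq, ← UniqueFactorizationMonoid.irreducible_iff_prime]
  refine Polynomial.irreducible_X_pow_sub_C_of_prime_dvd (X_prime (i := 0)) (dvd_mul_right _ _)
    ?_ two_ne_zero
  rw [pow_two, mul_dvd_mul_iff_left (X_prime (i := 0)).ne_zero, X_dvd_X]
  decide

theorem span_equation_le : Ideal.span {equation K} ≤ Ideal.span (X '' {1, 2}) := by
  have hY : (X 1 : MvPolynomial (Fin 3) K) ∈ Ideal.span (X '' {1, 2}) :=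
    Ideal.subset_span ⟨1, by simp, rfl⟩
  have hZ : (X 2 : MvPolynomial (Fin 3) K) ∈ Ideal.span (X '' {1, 2}) :=
    Ideal.subset_span ⟨2, by simp, rfl⟩
  rw [Ideal.span_singleton_le_iff_mem]
  exact Ideal.sub_mem _ (Ideal.pow_mem_of_mem _ hZ 2 two_pos) (Ideal.mul_mem_left _ _ hY)

theorem axisIdeal_eq_map :
    axisIdeal K = (Ideal.span (X '' {1, 2})).map (Ideal.Quotient.mk (Ideal.span {equation K})) := by
  rw [Set.image_pair, Ideal.map_span, Set.image_pair]

instance isPrime_span_equation : (Ideal.span {equation K}).IsPrime :=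
  (Ideal.span_singleton_prime (prime_equation K).ne_zero).2 (prime_equation K)

instance isPrime_axisIdeal : (axisIdeal K).IsPrime := by
  have := isPrime_span_X_image (R := K) ({1, 2} : Set (Fin 3))
  rw [axisIdeal_eq_map]
  exact Ideal.map_isPrime_of_surjective Ideal.Quotient.mk_surjective
    (by rw [Ideal.mk_ker]; exact span_equation_le K)

theorem mk_X_zero_notMem_axisIdeal : Ideal.Quotient.mk _ (X 0) ∉ axisIdeal K := by
  rw [axisIdeal_eq_map, Ideal.mem_quotient_iff_mem (span_equation_le K), mem_ideal_span_X_image]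
  simp [support_X]

theorem mk_X_two_ne_zero : Ideal.Quotient.mk (Ideal.span {equation K}) (X 2) ≠ 0 := by
  rw [Ne, Ideal.Quotient.eq_zero_iff_mem, Ideal.mem_span_singleton]
  intro h
  -- at `x = y = 0` the divisibility `z² - xy ∣ z` becomes `T² ∣ T` in `K[T]`
  have := map_dvd (aeval fun i : Fin 3 => if i = 2 then (Polynomial.X : Polynomial K) else 0) h
  simp only [Fin.isValue, map_sub, map_pow, aeval_X, ↓reduceIte, map_mul, Fin.reduceEq, mul_zero,
    sub_zero] at this
  have h21 := (pow_dvd_pow_iff Polynomial.X_ne_zero Polynomial.not_isUnit_X).mp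
    (this.trans (pow_one (Polynomial.X : Polynomial K)).symm.dvd)
  omega

abbrev Local := Localization.AtPrime (axisIdeal K)

abbrev coord (i : Fin 3) : Local K :=
  algebraMap (CoordRing K) (Local K) (Ideal.Quotient.mk _ (X i))

theorem coord_two_sq : coord K 2 ^ 2 = coord K 0 * coord K 1 := by
  rw [← map_pow, ← map_mul, ← map_pow, ← map_mul,
    Ideal.Quotient.eq.mpr (Ideal.mem_span_singleton_self (equation K))]

theorem isUnit_coord_zero : IsUnit (coord K 0) :=
  IsLocalization.map_units (Local K) (⟨_, mk_X_zero_notMem_axisIdeal K⟩ : (axisIdeal K).primeCompl)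

theorem associated_coord_one : Associated (coord K 1) (coord K 2 ^ 2) := by
  rw [coord_two_sq]
  exact (associated_unit_mul_left _ _ (isUnit_coord_zero K)).symm

theorem coord_two_ne_zero : coord K 2 ≠ 0 :=
  (map_ne_zero_iff _ (IsLocalization.injective (Local K)
    (axisIdeal K).primeCompl_le_nonZeroDivisors)).mpr (mk_X_two_ne_zero K)

theorem maximalIdeal_eq_span_coord_two :
    IsLocalRing.maximalIdeal (Local K) = Ideal.span {coord K 2} := by
  rw [← Localization.AtPrime.map_eq_maximalIdeal, Ideal.map_span, Set.image_pair]
  exact Submodule.span_insert_eq_span (Ideal.mem_span_singleton.mpr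
    ((associated_coord_one K).dvd_iff_dvd_right.mpr (dvd_pow_self _ two_ne_zero)))

theorem isDiscreteValuationRing_local : IsDiscreteValuationRing (Local K) :=
  IsLocalRing.isDiscreteValuationRing_of_maximalIdeal_eq_span (coord_two_ne_zero K)
    (maximalIdeal_eq_span_coord_two K)

theorem coord_one_mem_maximalIdeal_pow_iff (k : ℕ) :
    coord K 1 ∈ IsLocalRing.maximalIdeal (Local K) ^ k ↔ k ≤ 2 :=
  IsLocalRing.mem_maximalIdeal_pow_iff_of_associated (A := Local K) (coord_two_ne_zero K)
    (maximalIdeal_eq_span_coord_two K) (associated_coord_one K) k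

theorem coord_two_mem_maximalIdeal_pow_iff (k : ℕ) :
    coord K 2 ∈ IsLocalRing.maximalIdeal (Local K) ^ k ↔ k ≤ 1 :=
  IsLocalRing.mem_maximalIdeal_pow_iff_of_associated (A := Local K) (coord_two_ne_zero K)
    (maximalIdeal_eq_span_coord_two K) (by rw [pow_one]; rfl) k

end QuadricCone

end

/-- In `R = K[x,y,z]/(z² − xy)`, the localization at the prime ideal `P = (y, z)` is a
discrete valuation ring, in which `y` has valuation `2` (it lies in `m² \ m³` for the
maximal ideal `m`) while `z` has valuation `1` (it lies in `m \ m²`). -/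
theorem quadricCone_localization_dvr (K : Type*) [Field K] :
    letI R := MvPolynomial (Fin 3) K ⧸
      (Ideal.span {(X 2 : MvPolynomial (Fin 3) K) ^ 2 - X 0 * X 1})
    letI P : Ideal R := Ideal.span {Ideal.Quotient.mk _ (X 1), Ideal.Quotient.mk _ (X 2)}
    ∃ (_ : P.IsPrime) (_ : IsDomain (Localization.AtPrime P)),
      IsDiscreteValuationRing (Localization.AtPrime P) ∧
      (algebraMap R (Localization.AtPrime P) (Ideal.Quotient.mk _ (X 1)) ∈
          IsLocalRing.maximalIdeal (Localization.AtPrime P) ^ 2 ∧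
        algebraMap R (Localization.AtPrime P) (Ideal.Quotient.mk _ (X 1)) ∉
          IsLocalRing.maximalIdeal (Localization.AtPrime P) ^ 3) ∧
      (algebraMap R (Localization.AtPrime P) (Ideal.Quotient.mk _ (X 2)) ∈
          IsLocalRing.maximalIdeal (Localization.AtPrime P) ∧
        algebraMap R (Localization.AtPrime P) (Ideal.Quotient.mk _ (X 2)) ∉
          IsLocalRing.maximalIdeal (Localization.AtPrime P) ^ 2) := by
  open QuadricCone in
  refine ⟨inferInstance, inferInstance, isDiscreteValuationRing_local K,
    ⟨(coord_one_mem_maximalIdeal_pow_iff K 2).mpr le_rfl,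
      fun h => absurd ((coord_one_mem_maximalIdeal_pow_iff K 3).mp h) (by norm_num)⟩,
    ⟨by simpa using (coord_two_mem_maximalIdeal_pow_iff K 1).mpr le_rfl,
      fun h => absurd ((coord_two_mem_maximalIdeal_pow_iff K 2).mp h) (by norm_num)⟩⟩
end
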